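/- arXiv:2102.10061 — 2 statements merged into one kernel-verified Lean document; each statement's English description precedes it below -/
import Mathlib

section
/- Simple treewidth is minor-monotone: if H is a minor of G, then stw(H) ≤ stw(G). -/
open SimpleGraph

/-- `(T, B)` is a tree-decomposition of `G`. -/
def IsTreeDecomp {V ι : Type} (G : SimpleGraph V) (T : SimpleGraph ι) (B : ι → Set V) : Prop :=
  T.Connected ∧ T.IsAcyclic ∧
  (∀ v : V, ∃ t, v ∈ B t) ∧
  (∀ (v : V) (t₁ t₂ : ι), v ∈ B t₁ → v ∈ B t₂ →
    ∀ p : T.Walk t₁ t₂, p.IsPath → ∀ t ∈ p.support, v ∈ B t) ∧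
  (∀ u v : V, G.Adj u v → ∃ t, u ∈ B t ∧ v ∈ B t)

/-- The treewidth of `G`. -/
noncomputable def treewidth {V : Type} (G : SimpleGraph V) : ℕ :=
  sInf { k | ∃ (ι : Type) (T : SimpleGraph ι) (B : ι → Set V),
    IsTreeDecomp G T B ∧ ∀ t, (B t).ncard ≤ k + 1 }

/-- The simple treewidth of `G`: the least `k` admitting a `k`-simple tree-decomposition,
i.e. one of width at most `k` in which every `k`-element vertex set is contained in at
most two bags. -/
noncomputable def stw {V : Type} (G : SimpleGraph V) : ℕ :=
  sInf { k | ∃ (ι : Type) (T : SimpleGraph ι) (B : ι → Set V),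
    IsTreeDecomp G T B ∧ (∀ t, (B t).ncard ≤ k + 1) ∧
    (∀ X : Set V, X.ncard = k → ∀ t₁ t₂ t₃ : ι,
      X ⊆ B t₁ → X ⊆ B t₂ → X ⊆ B t₃ → t₁ = t₂ ∨ t₁ = t₃ ∨ t₂ = t₃) }

/-- `H` is a minor of `G`: there is a family of disjoint nonempty connected branch sets
in `G`, one for each vertex of `H`, with edges of `H` realized by edges of `G`. -/
def IsMinor {W V : Type} (H : SimpleGraph W) (G : SimpleGraph V) : Prop :=
  ∃ f : W → Set V,
    (∀ w, (f w).Nonempty) ∧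
    (∀ w, (G.induce (f w)).Connected) ∧
    (Pairwise fun w₁ w₂ => Disjoint (f w₁) (f w₂)) ∧
    (∀ w₁ w₂, H.Adj w₁ w₂ → ∃ u ∈ f w₁, ∃ v ∈ f w₂, G.Adj u v)

/-!
Pull a `k`-simple tree-decomposition `(T, B)` of `G` back along the branch sets of the minor: a
vertex of `H` goes into the bag of `t` when its branch set meets `B t`. This is a
tree-decomposition of `H` of width at most `k`, but need not be `k`-simple. Since a connected
branch set meeting the bags at both ends of a tree edge meets their intersection, a `k`-set of
`H` in two adjacent bags lifts to a `k`-set of `G` in the two corresponding bags of `T`. When a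
`k`-set `X` of `H` lies in the bag of a node `m` and of two of its neighbours, the two lifts are
distinct by `k`-simplicity of `(T, B)` and together fill the bag of `m`, which is therefore `X`;
a third such neighbour would give three lifts in a bag of size `k + 1`, two of which coincide.
This local condition survives contracting an edge `st` of the tree with `B s ⊆ B t`, and on a
finite tree where no such edge is left it implies `k`-simplicity.
-/

namespace Set

variable {α β : Type*} {k : ℕ} {M Y Z : Set α}

theorem subset_union_of_ncard_eq (hM : M.Finite) (hMk : M.ncard ≤ k + 1) (hYM : Y ⊆ M)
    (hZM : Z ⊆ M) (hY : Y.ncard = k) (hZ : Z.ncard = k) (hYZ : Y ≠ Z) : M ⊆ Y ∪ Z := by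
  obtain ⟨z, hzZ, hzY⟩ := not_subset.mp fun hZY : Z ⊆ Y =>
    hYZ (eq_of_subset_of_ncard_le hZY (by omega) (hM.subset hYM)).symm
  have hM_eq : insert z Y = M := eq_of_subset_of_ncard_le (insert_subset (hZM hzZ) hYM)
    (by rw [ncard_insert_of_notMem hzY (hM.subset hYM)]; omega) hM
  exact hM_eq ▸ insert_subset (Or.inr hzZ) subset_union_left

theorem eq_sdiff_singleton_or_of_injOn {φ : α → β} {x y : α} (hM : M.Finite)
    (hMk : M.ncard ≤ k + 1) (hx : x ∈ M) (hy : y ∈ M) (hxy : x ≠ y) (hφ : φ x = φ y)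
    (hYM : Y ⊆ M) (hY : Y.ncard = k) (hinj : InjOn φ Y) : Y = M \ {x} ∨ Y = M \ {y} := by
  have eq_of_notMem : ∀ z ∈ M, z ∉ Y → Y = M \ {z} := fun z hz hzY =>
    eq_of_subset_of_ncard_le (fun w hw => ⟨hYM hw, fun h => hzY (h ▸ hw)⟩)
      (by rw [ncard_sdiff_singleton_of_mem hz]; omega) hM.sdiff
  by_cases hxY : x ∈ Y
  · exact Or.inr (eq_of_notMem y hy fun hyY => hxy (hinj hxY hyY hφ))
  · exact Or.inl (eq_of_notMem x hx hxY)

/-- Each `Yᵢ` misses one of two points of `M` with the same image under `φ`. -/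
theorem eq_or_eq_or_eq_of_injOn {Y₁ Y₂ Y₃ : Set α} {φ : α → β} (hM : M.Finite)
    (hMk : M.ncard ≤ k + 1) (hY₁M : Y₁ ⊆ M) (hY₂M : Y₂ ⊆ M) (hY₃M : Y₃ ⊆ M)
    (hY₁ : Y₁.ncard = k) (hY₂ : Y₂.ncard = k) (hY₃ : Y₃.ncard = k) (hinj₁ : InjOn φ Y₁)
    (hinj₂ : InjOn φ Y₂) (hinj₃ : InjOn φ Y₃) (hφ : φ '' Y₂ ⊆ φ '' Y₁) :
    Y₁ = Y₂ ∨ Y₁ = Y₃ ∨ Y₂ = Y₃ := by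
  by_cases h₁₂ : Y₁ = Y₂
  · exact Or.inl h₁₂
  obtain ⟨x, hx₂, hx₁⟩ := not_subset.mp fun h : Y₂ ⊆ Y₁ =>
    h₁₂ (eq_of_subset_of_ncard_le h (by omega) (hM.subset hY₁M)).symm
  obtain ⟨y, hy₁, hyx⟩ := hφ (mem_image_of_mem φ hx₂)
  have key := fun Y hYM hY hinj => eq_sdiff_singleton_or_of_injOn (Y := Y) hM hMk (hY₂M hx₂)
    (hY₁M hy₁) (fun h => hx₁ (h ▸ hy₁)) hyx.symm hYM hY hinj
  rcases key Y₁ hY₁M hY₁ hinj₁ with h₁ | h₁ <;> rcases key Y₂ hY₂M hY₂ hinj₂ with h₂ | h₂ <;>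
    rcases key Y₃ hY₃M hY₃ hinj₃ with h₃ | h₃ <;> simp only [h₁, h₂, h₃, true_or, or_true]

end Set

namespace SimpleGraph

variable {V W : Type*} {G : SimpleGraph V}

theorem IsAcyclic.support_subset_of_isPath (hG : G.IsAcyclic) {u v : V} {p : G.Walk u v}
    (hp : p.IsPath) (q : G.Walk u v) : p.support ⊆ q.support := by
  classical
  have hpq : p = q.bypass :=
    congrArg Subtype.val ((hG.subsingleton_path u v).elim ⟨p, hp⟩ ⟨q.bypass, q.bypass_isPath⟩)
  exact hpq ▸ q.support_bypass_subset_support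

theorem Walk.IsPath.exists_adj_adj {u v : V} {p : G.Walk u v} (hp : p.IsPath)
    (hlen : 2 ≤ p.length) : ∃ m ∈ p.support, ∃ a ∈ p.support, ∃ b ∈ p.support,
      G.Adj m a ∧ G.Adj m b ∧ a ≠ b := by
  refine ⟨p.getVert 1, p.getVert_mem_support 1, p.getVert 0, p.getVert_mem_support 0,
    p.getVert 2, p.getVert_mem_support 2, (p.adj_getVert_succ (by omega)).symm,
    p.adj_getVert_succ (by omega), fun h => ?_⟩
  have := hp.getVert_injOn (by simp) (by simp; omega) h
  omega

def contract (G : SimpleGraph V) (f : V → W) : SimpleGraph W :=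
  fromEdgeSet (Sym2.map f '' G.edgeSet)

variable {f : V → W}

theorem contract_adj {a b : W} :
    (G.contract f).Adj a b ↔ a ≠ b ∧ ∃ x y, G.Adj x y ∧ f x = a ∧ f y = b := by
  simp only [contract, fromEdgeSet_adj, Set.mem_image, Sym2.exists, mem_edgeSet, Sym2.map_mk,
    Sym2.eq_iff]
  constructor
  · rintro ⟨⟨x, y, hxy, (⟨rfl, rfl⟩ | ⟨rfl, rfl⟩)⟩, hab⟩
    exacts [⟨hab, x, y, hxy, rfl, rfl⟩, ⟨hab, y, x, hxy.symm, rfl, rfl⟩]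
  · rintro ⟨hab, x, y, hxy, rfl, rfl⟩
    exact ⟨⟨x, y, hxy, Or.inl ⟨rfl, rfl⟩⟩, hab⟩

theorem Walk.exists_contract {u v : V} (p : G.Walk u v) :
    ∃ q : (G.contract f).Walk (f u) (f v), ∀ z ∈ q.support, ∃ x ∈ p.support, f x = z := by
  induction p with
  | nil => exact ⟨.nil, by simp⟩
  | @cons u w v h p ih =>
    obtain ⟨q, hq⟩ := ih
    have hq' : ∀ z ∈ q.support, ∃ x ∈ (Walk.cons h p).support, f x = z := fun z hz => by
      obtain ⟨x, hx, rfl⟩ := hq z hz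
      exact ⟨x, p.support_subset_support_cons h hx, rfl⟩
    by_cases huw : f u = f w
    · exact ⟨q.copy huw.symm rfl, by simpa using hq'⟩
    · refine ⟨.cons (contract_adj.mpr ⟨huw, u, w, h, rfl, rfl⟩) q, ?_⟩
      rw [Walk.support_cons, List.forall_mem_cons]
      exact ⟨⟨u, Walk.start_mem_support _, rfl⟩, hq'⟩

theorem Connected.contract (hG : G.Connected) (hf : Function.Surjective f) :
    (G.contract f).Connected := by
  refine (connected_iff _).mpr ⟨fun a b => ?_, hG.nonempty.map f⟩
  obtain ⟨x, rfl⟩ := hf a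
  obtain ⟨y, rfl⟩ := hf b
  obtain ⟨q, -⟩ := (hG.preconnected x y).some.exists_contract (f := f)
  exact q.reachable

/-- The hypotheses say that `f` contracts exactly one edge. -/
theorem IsTree.contract [Finite V] (hG : G.IsTree) (hf : Function.Surjective f)
    (hcard : Nat.card W + 1 = Nat.card V) {x y : V} (hxy : G.Adj x y) (hfxy : f x = f y) :
    (G.contract f).IsTree := by
  have : Finite W := Finite.of_surjective f hf
  have hconn := hG.connected.contract hf
  have hedges := (isTree_iff_connected_and_card.mp hG).2
  have hsub : (G.contract f).edgeSet ⊆ Sym2.map f '' G.edgeSet \ {s(f x, f x)} := by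
    rw [SimpleGraph.contract, edgeSet_fromEdgeSet]
    exact Set.sdiff_subset_sdiff_right (by simp)
  have hmem : s(f x, f x) ∈ Sym2.map f '' G.edgeSet := ⟨s(x, y), hxy, by simp [hfxy]⟩
  have hle : Nat.card (G.contract f).edgeSet + 1 ≤ Nat.card G.edgeSet := by
    simp only [Nat.card_coe_set_eq]
    have := Set.ncard_le_ncard hsub
    have := Set.ncard_image_le (f := Sym2.map f) (s := G.edgeSet)
    rw [Set.ncard_sdiff_singleton_of_mem hmem] at *
    have := (Set.ncard_pos (Set.toFinite _)).mpr ⟨_, hmem⟩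
    omega
  exact isTree_iff_connected_and_card.mpr
    ⟨hconn, le_antisymm (by omega) hconn.card_vert_le_card_edgeSet_add_one⟩

end SimpleGraph

section TreeDecomp

variable {V ι κ : Type} {G : SimpleGraph V} {T : SimpleGraph ι} {B : ι → Set V}

namespace IsTreeDecomp

theorem connected (h : IsTreeDecomp G T B) : T.Connected := h.1

theorem isAcyclic (h : IsTreeDecomp G T B) : T.IsAcyclic := h.2.1

theorem isTree (h : IsTreeDecomp G T B) : T.IsTree := ⟨h.connected, h.isAcyclic⟩

theorem exists_mem (h : IsTreeDecomp G T B) (v : V) : ∃ t, v ∈ B t :=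
  h.2.2.1 v

theorem exists_mem_of_adj (h : IsTreeDecomp G T B) {u v : V} (huv : G.Adj u v) :
    ∃ t, u ∈ B t ∧ v ∈ B t :=
  h.2.2.2.2 u v huv

theorem mem_of_mem_support (h : IsTreeDecomp G T B) {v : V} {a b : ι} (ha : v ∈ B a)
    (hb : v ∈ B b) {p : T.Walk a b} (hp : p.IsPath) {t : ι} (ht : t ∈ p.support) : v ∈ B t :=
  h.2.2.2.1 v a b ha hb p hp t ht

theorem subset_of_mem_support (h : IsTreeDecomp G T B) {X : Set V} {a b : ι} (ha : X ⊆ B a)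
    (hb : X ⊆ B b) {p : T.Walk a b} (hp : p.IsPath) {t : ι} (ht : t ∈ p.support) : X ⊆ B t :=
  fun _ hv => h.mem_of_mem_support (ha hv) (hb hv) hp ht

theorem exists_adj_adj_of_subset (h : IsTreeDecomp G T B) {X : Set V} {t₁ t₂ t₃ : ι}
    (h₁ : X ⊆ B t₁) (h₂ : X ⊆ B t₂) (h₃ : X ⊆ B t₃) (h₁₂ : t₁ ≠ t₂) (h₁₃ : t₁ ≠ t₃)
    (h₂₃ : t₂ ≠ t₃) :
    ∃ m a b, T.Adj m a ∧ T.Adj m b ∧ a ≠ b ∧ X ⊆ B m ∧ X ⊆ B a ∧ X ⊆ B b := by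
  have of_path : ∀ {x y : ι} {p : T.Walk x y}, p.IsPath → 2 ≤ p.length → X ⊆ B x → X ⊆ B y →
      ∃ m a b, T.Adj m a ∧ T.Adj m b ∧ a ≠ b ∧ X ⊆ B m ∧ X ⊆ B a ∧ X ⊆ B b := by
    intro x y p hp hlen hx hy
    obtain ⟨m, hm, a, ha, b, hb, hma, hmb, hab⟩ := hp.exists_adj_adj hlen
    exact ⟨m, a, b, hma, hmb, hab, h.subset_of_mem_support hx hy hp hm,
      h.subset_of_mem_support hx hy hp ha, h.subset_of_mem_support hx hy hp hb⟩
  obtain ⟨p, hp⟩ := h.connected.exists_isPath t₁ t₂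
  obtain ⟨q, hq⟩ := h.connected.exists_isPath t₁ t₃
  by_cases hp₂ : 2 ≤ p.length
  · exact of_path hp hp₂ h₁ h₂
  by_cases hq₂ : 2 ≤ q.length
  · exact of_path hq hq₂ h₁ h₃
  have hp₁ : p.length = 1 := by
    have := mt p.eq_of_length_eq_zero h₁₂
    omega
  have hq₁ : q.length = 1 := by
    have := mt q.eq_of_length_eq_zero h₁₃
    omega
  exact ⟨t₁, t₂, t₃, Walk.adj_of_length_eq_one hp₁, Walk.adj_of_length_eq_one hq₁, h₂₃, h₁, h₂, h₃⟩

theorem mem_of_adj_of_adj (h : IsTreeDecomp G T B) {a s b : ι} (has : T.Adj a s)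
    (hsb : T.Adj s b) (hab : a ≠ b) {v : V} (ha : v ∈ B a) (hb : v ∈ B b) : v ∈ B s :=
  h.mem_of_mem_support ha hb (p := .cons has (.cons hsb .nil))
    (by simp [Walk.cons_isPath_iff, has.ne, hsb.ne, hab]) (by simp)

theorem of_walks (hT : T.IsTree) (hcover : ∀ v, ∃ t, v ∈ B t)
    (hwalk : ∀ v a b, v ∈ B a → v ∈ B b → ∃ p : T.Walk a b, ∀ t ∈ p.support, v ∈ B t)
    (hedge : ∀ u v, G.Adj u v → ∃ t, u ∈ B t ∧ v ∈ B t) : IsTreeDecomp G T B := by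
  refine ⟨hT.1, hT.2, hcover, fun v a b ha hb p hp t ht => ?_, hedge⟩
  obtain ⟨q, hq⟩ := hwalk v a b ha hb
  exact hq t (hT.2.support_subset_of_isPath hp q ht)

theorem induce (h : IsTreeDecomp G T B) {S : Set ι} (hS : (T.induce S).Connected)
    (hcover : ∀ v, ∃ t ∈ S, v ∈ B t) (hedge : ∀ u v, G.Adj u v → ∃ t ∈ S, u ∈ B t ∧ v ∈ B t) :
    IsTreeDecomp G (T.induce S) (fun t => B t) := by
  refine ⟨hS, h.isAcyclic.induce S, fun v => ?_, fun v a b ha hb p hp t ht => ?_, fun u v huv => ?_⟩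
  · obtain ⟨t, htS, hv⟩ := hcover v
    exact ⟨⟨t, htS⟩, hv⟩
  · refine h.mem_of_mem_support ha hb (p := p.map (Embedding.induce (G := T) S).toHom)
      (hp.map (Embedding.induce (G := T) S).injective) ?_
    exact (Walk.support_map _ _).symm ▸ List.mem_map_of_mem ht
  · obtain ⟨t, htS, hu, hv⟩ := hedge u v huv
    exact ⟨⟨t, htS⟩, hu, hv⟩

theorem exists_finite_induce [Finite V] (h : IsTreeDecomp G T B) :
    ∃ S : Set ι, S.Finite ∧ IsTreeDecomp G (T.induce S) (fun t => B t) := by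
  classical
  have : Fintype V := Fintype.ofFinite V
  obtain ⟨t₀⟩ := h.connected.nonempty
  choose cover hcover using h.exists_mem
  choose edge hedge using fun e : V × V => show ∃ t, G.Adj e.1 e.2 → e.1 ∈ B t ∧ e.2 ∈ B t from
    if he : G.Adj e.1 e.2 then (h.exists_mem_of_adj he).imp fun _ ht _ => ht else ⟨t₀, he.elim⟩
  obtain ⟨S, hS, hSconn⟩ := extend_finset_to_connected h.connected.preconnected
    (Finset.insert_nonempty t₀ (Finset.univ.image cover ∪ Finset.univ.image edge))
  refine ⟨S, S.finite_toSet, h.induce hSconn (fun v => ⟨cover v, hS (by simp), hcover v⟩)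
    (fun u v huv => ⟨edge (u, v), hS (by simp), hedge (u, v) huv⟩)⟩

theorem mem_of_not_reachable (h : IsTreeDecomp G T B) {s t r₁ r₂ : ι} {v : V}
    (h₁ : v ∈ B r₁) (h₂ : v ∈ B r₂) (hr : ¬ (T.deleteEdges {s(s, t)}).Reachable r₁ r₂) :
    v ∈ B s ∧ v ∈ B t := by
  obtain ⟨p, hp⟩ := h.connected.exists_isPath r₁ r₂
  have he : s(s, t) ∈ p.edges := by
    by_contra he
    exact hr (reachable_deleteEdges_iff_exists_walk.mpr ⟨p, he⟩)
  exact ⟨h.mem_of_mem_support h₁ h₂ hp (p.fst_mem_support_of_mem_edges he),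
    h.mem_of_mem_support h₁ h₂ hp (p.snd_mem_support_of_mem_edges he)⟩

theorem exists_mem_inter_of_connected (h : IsTreeDecomp G T B) {s t : ι} (hst : T.Adj s t)
    {S : Set V} (hS : (G.induce S).Connected) {u v : V} (hu : u ∈ S) (hus : u ∈ B s)
    (hv : v ∈ S) (hvt : v ∈ B t) : ∃ x ∈ S, x ∈ B s ∧ x ∈ B t := by
  set T' := T.deleteEdges {s(s, t)}
  have hbridge : ¬ T'.Reachable s t :=
    isBridge_iff.mp (isAcyclic_iff_forall_adj_isBridge.mp h.isAcyclic hst)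
  set tSide : Set V := {x | ∃ r, T'.Reachable r t ∧ x ∈ B r}
  by_cases huP : u ∈ tSide
  · obtain ⟨r, hr, hur⟩ := huP
    exact ⟨u, hu, h.mem_of_not_reachable hus hur fun hsr => hbridge (hsr.trans hr)⟩
  obtain ⟨c⟩ := hS.preconnected ⟨v, hv⟩ ⟨u, hu⟩
  obtain ⟨d, hd, ⟨r, hr, hxr⟩, hy⟩ := (c.map (Embedding.induce S).toHom).exists_boundary_dart
    tSide ⟨t, .refl t, hvt⟩ huP
  obtain ⟨r₀, hx₀, hy₀⟩ := h.exists_mem_of_adj d.adj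
  have hr₀ : ¬ T'.Reachable r₀ t := fun hr₀ => hy ⟨r₀, hr₀, hy₀⟩
  have hxS : d.fst ∈ S := by
    have := Walk.dart_fst_mem_support_of_mem_darts _ hd
    rw [Walk.support_map, List.mem_map] at this
    obtain ⟨x, -, hx⟩ := this
    exact hx ▸ x.2
  exact ⟨d.fst, hxS, h.mem_of_not_reachable hxr hx₀ fun hrr₀ => hr₀ (hrr₀.symm.trans hr)⟩

theorem exists_walk_of_induce_walk (h : IsTreeDecomp G T B) {S : Set V} {x y : S}
    (c : (G.induce S).Walk x y) {a b : ι} (ha : ↑x ∈ B a) (hb : ↑y ∈ B b) :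
    ∃ p : T.Walk a b, ∀ r ∈ p.support, (S ∩ B r).Nonempty := by
  induction c generalizing a with
  | nil =>
    obtain ⟨p, hp⟩ := h.connected.exists_isPath a b
    exact ⟨p, fun r hr => ⟨_, Subtype.prop _, h.mem_of_mem_support ha hb hp hr⟩⟩
  | @cons x z y hxz c ih =>
    obtain ⟨r₀, hx₀, hz₀⟩ := h.exists_mem_of_adj hxz
    obtain ⟨q, hq⟩ := ih hz₀ hb
    obtain ⟨p, hp⟩ := h.connected.exists_isPath a r₀
    refine ⟨p.append q, fun r hr => ?_⟩
    rcases (Walk.mem_support_append_iff _ _).mp hr with hr | hr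
    · exact ⟨x, x.2, h.mem_of_mem_support ha hx₀ hp hr⟩
    · exact hq r hr

theorem contract {π : ι → κ} {B' : κ → Set V} (h : IsTreeDecomp G T B)
    (htree : (T.contract π).IsTree) (hB : ∀ x, B x ⊆ B' (π x))
    (hB' : ∀ y, ∃ x, π x = y ∧ B' y ⊆ B x) : IsTreeDecomp G (T.contract π) B' := by
  refine .of_walks htree (fun v => ?_) (fun v a b ha hb => ?_) (fun u v huv => ?_)
  · obtain ⟨t, ht⟩ := h.exists_mem v
    exact ⟨π t, hB t ht⟩
  · obtain ⟨x, rfl, hx⟩ := hB' a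
    obtain ⟨y, rfl, hy⟩ := hB' b
    obtain ⟨p, hp⟩ := h.connected.exists_isPath x y
    obtain ⟨q, hq⟩ := p.exists_contract (f := π)
    refine ⟨q, fun z hz => ?_⟩
    obtain ⟨z', hz', rfl⟩ := hq z hz
    exact hB z' (h.mem_of_mem_support (hx ha) (hy hb) hp hz')
  · obtain ⟨t, hu, hv⟩ := h.exists_mem_of_adj huv
    exact ⟨π t, hB t hu, hB t hv⟩

end IsTreeDecomp

end TreeDecomp

section SimpleTreeDecomp

variable {V ι : Type} {G : SimpleGraph V} {T : SimpleGraph ι} {B : ι → Set V} {k : ℕ}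

def IsSimpleTreeDecomp (G : SimpleGraph V) (T : SimpleGraph ι) (B : ι → Set V) (k : ℕ) : Prop :=
  IsTreeDecomp G T B ∧ (∀ t, (B t).ncard ≤ k + 1) ∧
    (∀ X : Set V, X.ncard = k → ∀ t₁ t₂ t₃ : ι,
      X ⊆ B t₁ → X ⊆ B t₂ → X ⊆ B t₃ → t₁ = t₂ ∨ t₁ = t₃ ∨ t₂ = t₃)

theorem IsSimpleTreeDecomp.isTreeDecomp (h : IsSimpleTreeDecomp G T B k) : IsTreeDecomp G T B :=
  h.1

theorem IsSimpleTreeDecomp.ncard_le (h : IsSimpleTreeDecomp G T B k) (t : ι) :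
    (B t).ncard ≤ k + 1 :=
  h.2.1 t

theorem IsSimpleTreeDecomp.eq_or_eq_or_eq (h : IsSimpleTreeDecomp G T B k) {X : Set V}
    (hX : X.ncard = k) {t₁ t₂ t₃ : ι} (h₁ : X ⊆ B t₁) (h₂ : X ⊆ B t₂) (h₃ : X ⊆ B t₃) :
    t₁ = t₂ ∨ t₁ = t₃ ∨ t₂ = t₃ :=
  h.2.2 X hX t₁ t₂ t₃ h₁ h₂ h₃

theorem stw_le_of_isSimpleTreeDecomp (h : IsSimpleTreeDecomp G T B k) : stw G ≤ k :=
  Nat.sInf_le ⟨ι, T, B, h⟩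

theorem exists_isSimpleTreeDecomp_stw [Finite V] (G : SimpleGraph V) :
    ∃ (ι : Type) (T : SimpleGraph ι) (B : ι → Set V), IsSimpleTreeDecomp G T B (stw G) := by
  refine Nat.sInf_mem (s := {k | ∃ (ι : Type) (T : SimpleGraph ι) (B : ι → Set V),
    IsSimpleTreeDecomp G T B k}) ⟨Nat.card V, Unit, ⊤, fun _ => Set.univ, ?_, fun _ => ?_, ?_⟩
  · exact .of_walks ⟨connected_top, .of_subsingleton⟩ (fun _ => ⟨(), trivial⟩)
      (fun _ a b _ _ => ⟨Subsingleton.elim a b ▸ .nil, fun _ _ => trivial⟩)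
      (fun _ _ _ => ⟨(), trivial, trivial⟩)
  · simp
  · exact fun _ _ t₁ t₂ _ _ _ _ => Or.inl (Subsingleton.elim t₁ t₂)

theorem IsSimpleTreeDecomp.exists_finite [Finite V] (h : IsSimpleTreeDecomp G T B k) :
    ∃ (ι' : Type) (_ : Finite ι') (T' : SimpleGraph ι') (B' : ι' → Set V),
      IsSimpleTreeDecomp G T' B' k := by
  obtain ⟨S, hS, hTD⟩ := h.isTreeDecomp.exists_finite_induce
  refine ⟨S, hS.to_subtype, _, _, hTD, fun t => h.ncard_le t, fun X hX t₁ t₂ t₃ h₁ h₂ h₃ => ?_⟩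
  simpa [Subtype.ext_iff] using h.eq_or_eq_or_eq hX h₁ h₂ h₃

end SimpleTreeDecomp

/-- The local form of `k`-simplicity that survives both pulling a `k`-simple decomposition back to
a minor and contracting edges of the tree. -/
def LocallySimple {W ι : Type} (T : SimpleGraph ι) (B : ι → Set W) (k : ℕ) : Prop :=
  ∀ X : Set W, X.ncard = k → ∀ ⦃m a b⦄, T.Adj m a → T.Adj m b → a ≠ b →
    X ⊆ B m → X ⊆ B a → X ⊆ B b → B m = X ∧ ∀ ⦃c⦄, T.Adj m c → X ⊆ B c → c = a ∨ c = b

section Minor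

variable {V W ι : Type} {G : SimpleGraph V} {H : SimpleGraph W} {T : SimpleGraph ι}
  {B : ι → Set V} {f : W → Set V}

def pullbackBags (f : W → Set V) (B : ι → Set V) (t : ι) : Set W :=
  {w | (f w ∩ B t).Nonempty}

def branchesAt (f : W → Set V) (x : V) : Set W :=
  {w | x ∈ f w}

theorem branchesAt_eq_singleton (hdisj : Pairwise fun w₁ w₂ => Disjoint (f w₁) (f w₂))
    {x : V} {w : W} (hx : x ∈ f w) : branchesAt f x = {w} :=
  Set.eq_singleton_iff_unique_mem.mpr
    ⟨hx, fun _ hw' => by_contra fun hne => Set.disjoint_left.mp (hdisj hne) hw' hx⟩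

theorem IsTreeDecomp.pullback (h : IsTreeDecomp G T B) (hne : ∀ w, (f w).Nonempty)
    (hconn : ∀ w, (G.induce (f w)).Connected)
    (hedge : ∀ w₁ w₂, H.Adj w₁ w₂ → ∃ u ∈ f w₁, ∃ v ∈ f w₂, G.Adj u v) :
    IsTreeDecomp H T (pullbackBags f B) := by
  refine .of_walks h.isTree (fun w => ?_) (fun w a b ha hb => ?_) (fun w₁ w₂ hw => ?_)
  · obtain ⟨x, hx⟩ := hne w
    obtain ⟨t, ht⟩ := h.exists_mem x
    exact ⟨t, x, hx, ht⟩
  · obtain ⟨x, hx, hxa⟩ := ha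
    obtain ⟨y, hy, hyb⟩ := hb
    obtain ⟨c⟩ := (hconn w).preconnected ⟨x, hx⟩ ⟨y, hy⟩
    exact h.exists_walk_of_induce_walk c hxa hyb
  · obtain ⟨u, hu, v, hv, huv⟩ := hedge w₁ w₂ hw
    obtain ⟨t, hut, hvt⟩ := h.exists_mem_of_adj huv
    exact ⟨t, ⟨u, hu, hut⟩, ⟨v, hv, hvt⟩⟩

theorem ncard_pullbackBags_le [Finite V] (hdisj : Pairwise fun w₁ w₂ => Disjoint (f w₁) (f w₂))
    (t : ι) : (pullbackBags f B t).ncard ≤ (B t).ncard :=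
  calc (pullbackBags f B t).ncard = ((fun w => {w}) '' pullbackBags f B t).ncard :=
        (Set.ncard_image_of_injective _ Set.singleton_injective).symm
    _ ≤ (branchesAt f '' B t).ncard := Set.ncard_le_ncard <| by
        rintro _ ⟨w, ⟨x, hx, hxt⟩, rfl⟩
        exact ⟨x, hxt, branchesAt_eq_singleton hdisj hx⟩
    _ ≤ (B t).ncard := Set.ncard_image_le

/-- `Y` is a transversal of the branch sets `f w`, `w ∈ X`: it meets each of them exactly once. -/
theorem IsTreeDecomp.exists_transversal (h : IsTreeDecomp G T B)
    (hconn : ∀ w, (G.induce (f w)).Connected)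
    (hdisj : Pairwise fun w₁ w₂ => Disjoint (f w₁) (f w₂)) {m a : ι} (hma : T.Adj m a)
    {X : Set W} (hXm : X ⊆ pullbackBags f B m) (hXa : X ⊆ pullbackBags f B a) :
    ∃ Y, Y ⊆ B m ∧ Y ⊆ B a ∧ Set.InjOn (branchesAt f) Y ∧
      branchesAt f '' Y = (fun w => {w}) '' X ∧ Y.ncard = X.ncard := by
  have hex : ∀ w : X, ∃ x ∈ f w, x ∈ B m ∧ x ∈ B a := fun w => by
    obtain ⟨x, hx, hxm⟩ := hXm w.2
    obtain ⟨y, hy, hya⟩ := hXa w.2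
    exact h.exists_mem_inter_of_connected hma (hconn w) hx hxm hy hya
  choose g hgf hgm hga using hex
  have hbr : ∀ w, branchesAt f (g w) = {w.val} := fun w => branchesAt_eq_singleton hdisj (hgf w)
  have hinj : Set.InjOn (branchesAt f) (Set.range g) := by
    rintro _ ⟨w, rfl⟩ _ ⟨w', rfl⟩ heq
    rw [hbr, hbr, Set.singleton_eq_singleton_iff] at heq
    rw [Subtype.ext heq]
  have himg : branchesAt f '' Set.range g = (fun w => {w}) '' X := by
    rw [← Set.range_comp, Set.image_eq_range]
    exact congrArg Set.range (funext hbr)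
  refine ⟨Set.range g, Set.range_subset_iff.mpr hgm, Set.range_subset_iff.mpr hga, hinj, himg, ?_⟩
  rw [← hinj.ncard_image, himg, Set.ncard_image_of_injective _ Set.singleton_injective]

theorem IsSimpleTreeDecomp.ne_of_adj_of_adj {k : ℕ} (h : IsSimpleTreeDecomp G T B k) {m a b : ι}
    (hma : T.Adj m a) (hmb : T.Adj m b) (hab : a ≠ b) {Y Z : Set V} (hYm : Y ⊆ B m)
    (hYa : Y ⊆ B a) (hZb : Z ⊆ B b) (hY : Y.ncard = k) : Y ≠ Z := by
  rintro rfl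
  rcases h.eq_or_eq_or_eq hY hYa hYm hZb with h' | h' | h'
  exacts [hma.ne' h', hab h', hmb.ne h']

theorem IsSimpleTreeDecomp.locallySimple_pullback [Finite V] {k : ℕ}
    (h : IsSimpleTreeDecomp G T B k) (hconn : ∀ w, (G.induce (f w)).Connected)
    (hdisj : Pairwise fun w₁ w₂ => Disjoint (f w₁) (f w₂)) :
    LocallySimple T (pullbackBags f B) k := by
  intro X hX m a b hma hmb hab hXm hXa hXb
  obtain ⟨Ya, hYam, hYa, hinja, himga, hcarda⟩ :=
    h.isTreeDecomp.exists_transversal hconn hdisj hma hXm hXa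
  obtain ⟨Yb, hYbm, hYb, hinjb, himgb, hcardb⟩ :=
    h.isTreeDecomp.exists_transversal hconn hdisj hmb hXm hXb
  rw [hX] at hcarda hcardb
  have hBm : B m ⊆ Ya ∪ Yb := Set.subset_union_of_ncard_eq (Set.toFinite _) (h.ncard_le m)
    hYam hYbm hcarda hcardb (h.ne_of_adj_of_adj hma hmb hab hYam hYa hYb hcarda)
  refine ⟨subset_antisymm ?_ hXm, fun c hmc hXc => ?_⟩
  · rintro w ⟨x, hx, hxm⟩
    have hw : ({w} : Set W) ∈ (fun w => ({w} : Set W)) '' X := by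
      rw [← branchesAt_eq_singleton hdisj hx]
      rcases hBm hxm with hxY | hxY
      · exact himga ▸ Set.mem_image_of_mem _ hxY
      · exact himgb ▸ Set.mem_image_of_mem _ hxY
    obtain ⟨w', hw', heq⟩ := hw
    exact Set.singleton_injective heq ▸ hw'
  · by_contra! hc
    obtain ⟨Yc, hYcm, hYc, hinjc, -, hcardc⟩ :=
      h.isTreeDecomp.exists_transversal hconn hdisj hmc hXm hXc
    rw [hX] at hcardc
    rcases Set.eq_or_eq_or_eq_of_injOn (Set.toFinite _) (h.ncard_le m) hYam hYbm hYcm hcarda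
      hcardb hcardc hinja hinjb hinjc (himgb.trans himga.symm).le with e | e | e
    · exact h.ne_of_adj_of_adj hma hmb hab hYam hYa hYb hcarda e
    · exact h.ne_of_adj_of_adj hma hmc (Ne.symm hc.1) hYam hYa hYc hcarda e
    · exact h.ne_of_adj_of_adj hmb hmc (Ne.symm hc.2) hYbm hYb hYc hcardb e

end Minor

section EdgeContraction

variable {W ι : Type} {H : SimpleGraph W} {T : SimpleGraph ι} {B : ι → Set W} {k : ℕ} {s t : ι}

open Classical in
noncomputable def mergeInto (hst : T.Adj s t) (x : ι) : {x // x ≠ s} :=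
  if h : x = s then ⟨t, hst.ne'⟩ else ⟨x, h⟩

theorem coe_mergeInto_of_ne (hst : T.Adj s t) {x : ι} (hx : x ≠ s) :
    (mergeInto hst x : ι) = x := by
  simp [mergeInto, hx]

theorem coe_mergeInto_self (hst : T.Adj s t) : (mergeInto hst s : ι) = t := by
  simp [mergeInto]

theorem mergeInto_coe (hst : T.Adj s t) (y : {x // x ≠ s}) : mergeInto hst y = y :=
  Subtype.ext (coe_mergeInto_of_ne hst y.2)

theorem mergeInto_self (hst : T.Adj s t) : mergeInto hst s = mergeInto hst t :=
  Subtype.ext (by rw [coe_mergeInto_self, coe_mergeInto_of_ne hst hst.ne'])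

theorem eq_or_of_mergeInto_eq (hst : T.Adj s t) {x : ι} {m : {x // x ≠ s}}
    (hx : mergeInto hst x = m) : x = m ∨ (x = s ∧ (m : ι) = t) := by
  by_cases hxs : x = s
  · exact Or.inr ⟨hxs, hx ▸ hxs ▸ coe_mergeInto_self hst⟩
  · exact Or.inl (hx ▸ (coe_mergeInto_of_ne hst hxs).symm)

theorem IsTreeDecomp.subset_of_mergeInto (h : IsTreeDecomp H T B) (hst : T.Adj s t)
    {X : Set W} {x y : ι} (hxy : T.Adj x y) (hne : mergeInto hst x ≠ mergeInto hst y)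
    (hx : X ⊆ B (mergeInto hst x)) (hy : X ⊆ B (mergeInto hst y)) : X ⊆ B x := by
  by_cases hxs : x = s
  · subst hxs
    have hyt : y ≠ t := fun hyt => hne (by rw [mergeInto_self, hyt])
    rw [coe_mergeInto_self] at hx
    rw [coe_mergeInto_of_ne hst hxy.ne'] at hy
    exact fun v hv => h.mem_of_adj_of_adj hxy.symm hst hyt (hy hv) (hx hv)
  · rwa [coe_mergeInto_of_ne hst hxs] at hx

theorem IsTreeDecomp.contract_mergeInto [Finite ι] (h : IsTreeDecomp H T B) (hst : T.Adj s t)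
    (hsub : B s ⊆ B t) : IsTreeDecomp H (T.contract (mergeInto hst)) (fun y => B y) := by
  have hsurj : Function.Surjective (mergeInto hst) := fun y => ⟨y, mergeInto_coe hst y⟩
  have hcard : Nat.card {x // x ≠ s} + 1 = Nat.card ι := by
    have := Fintype.ofFinite ι
    classical
    have := Fintype.card_pos_iff.mpr ⟨s⟩
    simp only [Nat.card_eq_fintype_card, Fintype.card_subtype_compl, Fintype.card_unique]
    omega
  refine h.contract (h.isTree.contract hsurj hcard hst (mergeInto_self hst)) (fun x => ?_)
    (fun y => ⟨y, mergeInto_coe hst y, le_rfl⟩)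
  by_cases hx : x = s
  · rw [hx, coe_mergeInto_self]
    exact hsub
  · rw [coe_mergeInto_of_ne hst hx]

/-- The edge `st` satisfies the condition of `LocallySimple` as if it were a single node with
bag `B t`. -/
theorem LocallySimple.eq_of_two_adj_edge (hloc : LocallySimple T B k) (hst : T.Adj s t)
    {X : Set W} (hX : X.ncard = k) (hXt : X ⊆ B t) {P : ι → Prop}
    (hP : ∀ ⦃y⦄, P y → y ≠ s ∧ y ≠ t ∧ X ⊆ B y ∧ (T.Adj t y ∨ (T.Adj s y ∧ X ⊆ B s)))
    {y₁ y₂ : ι} (hy₁ : P y₁) (hy₂ : P y₂) (hy : y₁ ≠ y₂) :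
    B t = X ∧ ∀ ⦃y₃⦄, P y₃ → y₃ = y₁ ∨ y₃ = y₂ := by
  obtain ⟨hs₁, ht₁, hX₁, h₁⟩ := hP hy₁
  obtain ⟨hs₂, ht₂, hX₂, h₂⟩ := hP hy₂
  have via_s_t : ∀ {u v}, T.Adj s u → X ⊆ B s → T.Adj t v → u ≠ t → v ≠ s → X ⊆ B u →
      X ⊆ B v → B t = X ∧ ∀ ⦃y₃⦄, P y₃ → y₃ = u ∨ y₃ = v := by
    intro u v hsu hXs htv hut hvs hXu hXv
    obtain ⟨hBt, hthird_t⟩ := hloc X hX hst.symm htv (Ne.symm hvs) hXt hXs hXv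
    obtain ⟨-, hthird_s⟩ := hloc X hX hsu hst hut hXs hXu hXt
    refine ⟨hBt, fun y₃ hy₃ => ?_⟩
    obtain ⟨hs₃, ht₃, hX₃, h₃ | ⟨h₃, -⟩⟩ := hP hy₃
    · exact Or.inr ((hthird_t h₃ hX₃).resolve_left hs₃)
    · exact Or.inl ((hthird_s h₃ hX₃).resolve_right ht₃)
  rcases h₁ with h₁ | ⟨h₁, hXs⟩ <;> rcases h₂ with h₂ | ⟨h₂, hXs⟩
  · obtain ⟨hBt, hthird⟩ := hloc X hX h₁ h₂ hy hXt hX₁ hX₂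
    refine ⟨hBt, fun y₃ hy₃ => ?_⟩
    obtain ⟨-, -, hX₃, h₃ | ⟨-, hXs⟩⟩ := hP hy₃
    · exact hthird h₃ hX₃
    · rcases hthird hst.symm hXs with h | h
      exacts [(hs₁ h.symm).elim, (hs₂ h.symm).elim]
  · obtain ⟨hBt, hthird⟩ := via_s_t h₂ hXs h₁ ht₂ hs₁ hX₂ hX₁
    exact ⟨hBt, fun y₃ hy₃ => (hthird hy₃).symm⟩
  · exact via_s_t h₁ hXs h₂ ht₁ hs₂ hX₁ hX₂
  · rcases (hloc X hX h₁ h₂ hy hXs hX₁ hX₂).2 hst hXt with h | h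
    exacts [(ht₁ h.symm).elim, (ht₂ h.symm).elim]

/-- The nodes of `T` representing the neighbours of `m` in the contracted tree whose bags
contain `X`. -/
def fibreNeighbour (hst : T.Adj s t) (B : ι → Set W) (X : Set W) (m : {x // x ≠ s})
    (y : ι) : Prop :=
  mergeInto hst y ≠ m ∧ X ⊆ B y ∧ ∃ x, mergeInto hst x = m ∧ T.Adj x y ∧ X ⊆ B x

theorem LocallySimple.eq_of_two_fibreNeighbours (hloc : LocallySimple T B k)
    (hst : T.Adj s t) (hsub : B s ⊆ B t) {X : Set W} (hX : X.ncard = k) {m : {x // x ≠ s}}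
    {y₁ y₂ : ι} (hy₁ : fibreNeighbour hst B X m y₁) (hy₂ : fibreNeighbour hst B X m y₂)
    (hy : y₁ ≠ y₂) :
    B m = X ∧ ∀ ⦃y₃⦄, fibreNeighbour hst B X m y₃ → y₃ = y₁ ∨ y₃ = y₂ := by
  by_cases hmt : (m : ι) = t
  · have hm : m = mergeInto hst t := Subtype.ext (by rw [coe_mergeInto_of_ne hst hst.ne', hmt])
    have hXt : X ⊆ B t := by
      obtain ⟨-, -, x, hxm, -, hXx⟩ := hy₁
      rcases eq_or_of_mergeInto_eq hst hxm with rfl | ⟨rfl, -⟩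
      exacts [hmt ▸ hXx, hXx.trans hsub]
    rw [hmt]
    refine hloc.eq_of_two_adj_edge hst hX hXt (fun y ⟨hym, hXy, x, hxm, hxy, hXx⟩ => ?_) hy₁ hy₂ hy
    refine ⟨fun hys => hym (by rw [hys, mergeInto_self, hm]), fun hyt => hym (by rw [hyt, hm]),
      hXy, ?_⟩
    rcases eq_or_of_mergeInto_eq hst hxm with rfl | ⟨rfl, -⟩
    exacts [Or.inl (hmt ▸ hxy), Or.inr ⟨hxy, hXx⟩]
  · have hm : ∀ {y}, fibreNeighbour hst B X m y → T.Adj m y ∧ X ⊆ B m ∧ X ⊆ B y := by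
      rintro y ⟨-, hXy, x, hxm, hxy, hXx⟩
      obtain rfl : x = m := (eq_or_of_mergeInto_eq hst hxm).resolve_right fun h => hmt h.2
      exact ⟨hxy, hXx, hXy⟩
    obtain ⟨h₁, hXm, hX₁⟩ := hm hy₁
    obtain ⟨h₂, -, hX₂⟩ := hm hy₂
    obtain ⟨hBm, hthird⟩ := hloc X hX h₁ h₂ hy hXm hX₁ hX₂
    exact ⟨hBm, fun y₃ hy₃ => hthird (hm hy₃).1 (hm hy₃).2.2⟩

theorem LocallySimple.contract_mergeInto (hloc : LocallySimple T B k) (h : IsTreeDecomp H T B)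
    (hst : T.Adj s t) (hsub : B s ⊆ B t) :
    LocallySimple (T.contract (mergeInto hst)) (fun y => B y) k := by
  have lift : ∀ {X : Set W} {m a : {x // x ≠ s}}, (T.contract (mergeInto hst)).Adj m a →
      X ⊆ B m → X ⊆ B a → ∃ y, mergeInto hst y = a ∧ fibreNeighbour hst B X m y := by
    intro X m a hma hXm hXa
    obtain ⟨hne, x, y, hxy, rfl, rfl⟩ := contract_adj.mp hma
    exact ⟨y, rfl, Ne.symm hne, h.subset_of_mergeInto hst hxy.symm (Ne.symm hne) hXa hXm, x, rfl,
      hxy, h.subset_of_mergeInto hst hxy hne hXm hXa⟩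
  intro X hX m a b hma hmb hab hXm hXa hXb
  obtain ⟨ya, rfl, hya⟩ := lift hma hXm hXa
  obtain ⟨yb, rfl, hyb⟩ := lift hmb hXm hXb
  obtain ⟨hBm, hthird⟩ := hloc.eq_of_two_fibreNeighbours hst hsub hX hya hyb fun h => hab (h ▸ rfl)
  refine ⟨hBm, fun c hmc hXc => ?_⟩
  obtain ⟨yc, rfl, hyc⟩ := lift hmc hXm hXc
  rcases hthird hyc with e | e <;> simp [e]

theorem LocallySimple.isSimpleTreeDecomp (hloc : LocallySimple T B k) (h : IsTreeDecomp H T B)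
    (hw : ∀ t, (B t).ncard ≤ k + 1) (htight : ∀ s t, T.Adj s t → ¬ B s ⊆ B t) :
    IsSimpleTreeDecomp H T B k := by
  refine ⟨h, hw, fun X hX t₁ t₂ t₃ h₁ h₂ h₃ => ?_⟩
  by_contra! hne
  obtain ⟨m, a, b, hma, hmb, hab, hXm, hXa, hXb⟩ :=
    h.exists_adj_adj_of_subset h₁ h₂ h₃ hne.1 hne.2.1 hne.2.2
  exact htight m a hma ((hloc X hX hma hmb hab hXm hXa hXb).1 ▸ hXa)

theorem LocallySimple.exists_isSimpleTreeDecomp [Finite ι] (hloc : LocallySimple T B k)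
    (h : IsTreeDecomp H T B) (hw : ∀ t, (B t).ncard ≤ k + 1) :
    ∃ (ι' : Type) (T' : SimpleGraph ι') (B' : ι' → Set W), IsSimpleTreeDecomp H T' B' k := by
  obtain ⟨n, hn⟩ : ∃ n, Nat.card ι = n := ⟨_, rfl⟩
  induction n using Nat.strong_induction_on generalizing ι with
  | _ n ih =>
  by_cases htight : ∀ s t, T.Adj s t → ¬ B s ⊆ B t
  · exact ⟨ι, T, B, hloc.isSimpleTreeDecomp h hw htight⟩
  push Not at htight
  obtain ⟨s, t, hst, hsub⟩ := htight
  have hcard : Nat.card {x // x ≠ s} < Nat.card ι := by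
    have := Fintype.ofFinite ι
    classical
    simpa only [Nat.card_eq_fintype_card] using Fintype.card_subtype_lt (p := (· ≠ s)) (x := s)
      (by simp)
  exact ih _ (hn ▸ hcard) (hloc.contract_mergeInto h hst hsub) (h.contract_mergeInto hst hsub)
    (fun y => hw y) rfl

end EdgeContraction

theorem stw_minor_monotone_general
    {W V : Type} [Fintype V] (H : SimpleGraph W) (G : SimpleGraph V)
    (h : IsMinor H G) :
    stw H ≤ stw G := by
  obtain ⟨f, hne, hconn, hdisj, hedge⟩ := h
  obtain ⟨ι, T, B, hG⟩ := exists_isSimpleTreeDecomp_stw G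
  obtain ⟨ι', _, T', B', hG'⟩ := hG.exists_finite
  obtain ⟨ι'', T'', B'', hH⟩ := (hG'.locallySimple_pullback hconn hdisj).exists_isSimpleTreeDecomp
    (hG'.isTreeDecomp.pullback hne hconn hedge)
    fun t => (ncard_pullbackBags_le hdisj t).trans (hG'.ncard_le t)
  exact stw_le_of_isSimpleTreeDecomp hH

theorem stw_minor_monotone
    {W V : Type} [Fintype W] [Fintype V] (H : SimpleGraph W) (G : SimpleGraph V)
    (h : IsMinor H G) :
    stw H ≤ stw G :=
  stw_minor_monotone_general H G h
end

section
/- Let G be a connected chordal graph with BFS-layering (L_0, L_1, …). If P is a shortest path among all v–w paths witnessing that w is weakly r-reachable from v (where v ∈ L_i, w ∈ L_j, j ≤ i), then P contains no vertex of any layer L_{j'} with j' < j, and once P enters layer L_j it remains in L_j. -/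
open SimpleGraph

/-- A graph is chordal if every cycle of length at least 4 has a chord. -/
def IsChordal {V : Type} (G : SimpleGraph V) : Prop :=
  ∀ (v : V) (c : G.Walk v v), c.IsCycle → 4 ≤ c.length →
    ∃ u w, u ∈ c.support ∧ w ∈ c.support ∧ G.Adj u w ∧ s(u, w) ∉ c.edges

/-!
Since `σ` lists lower BFS layers first, a witnessing path never drops below the layer `L_j`
of `w`. Suppose it leaves `L_j` and later returns: then it contains a detour from `x ∈ L_j`
to `y ∈ L_j` through higher layers only. A shortest such detour and a shortest `x`–`y` path
through lower layers (which exists via shortest paths to `s`) are both chordless, and no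
edge joins their interiors because those lie in layers at distance at least 2. Together
they form a chordless cycle, so chordality forces `x` and `y` to be adjacent, and the edge
`xy` shortens the witnessing path without leaving the vertices `≥_σ w`.
-/

namespace SimpleGraph.Walk

variable {V : Type*} {G : SimpleGraph V} {u v : V}

lemma exists_shortcut (p : G.Walk u v) {a b : ℕ} (hab : a < b) (hb : b ≤ p.length)
    (h : G.Adj (p.getVert a) (p.getVert b)) :
    ∃ q : G.Walk u v, q.length = a + 1 + (p.length - b) ∧ q.support ⊆ p.support := by
  refine ⟨(p.take a).append (cons h (p.drop b)), by simp; omega, ?_⟩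
  rw [support_append, support_cons, List.tail_cons]
  exact List.append_subset.mpr ⟨(p.isSubwalk_take a).support_subset,
    (p.isSubwalk_drop b).support_subset⟩

lemma exists_walk_getVert_getVert (p : G.Walk u v) {a b : ℕ} (hab : a ≤ b) :
    ∃ q : G.Walk (p.getVert a) (p.getVert b),
      ∀ z ∈ q.support, ∃ k, a ≤ k ∧ k ≤ b ∧ p.getVert k = z := by
  refine ⟨((p.drop a).take (b - a)).copy rfl (by simp [Nat.add_sub_cancel' hab]), ?_⟩
  intro z hz
  obtain ⟨n, rfl, -⟩ := mem_support_iff_exists_getVert.mp hz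
  exact ⟨a + min (b - a) n, by omega, by omega, by simp⟩

lemma isChordless_of_forall_length_le (p : G.Walk u v)
    (hmin : ∀ q : G.Walk u v, q.support ⊆ p.support → p.length ≤ q.length) :
    p.IsChordless := by
  have key : ∀ k l, k < l → l ≤ p.length → G.Adj (p.getVert k) (p.getVert l) →
      s(p.getVert k, p.getVert l) ∈ p.edges := by
    intro k l hkl hl h
    obtain ⟨q, hql, hqs⟩ := p.exists_shortcut hkl hl h
    have : l = k + 1 := by have := hmin q hqs; omega
    subst this
    exact p.mk_mem_edges_iff_exists.mpr ⟨k, by omega, rfl⟩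
  refine isChordless_iff_forall_mem_edges.mpr fun x y hx hy h => ?_
  obtain ⟨k, rfl, hk⟩ := mem_support_iff_exists_getVert.mp hx
  obtain ⟨l, rfl, hl⟩ := mem_support_iff_exists_getVert.mp hy
  rcases lt_trichotomy k l with hkl | rfl | hlk
  · exact key k l hkl hl h
  · exact absurd rfl h.ne
  · exact Sym2.eq_swap ▸ key l k hlk hk h.symm

lemma exists_isPath_isChordless_of_support_subset {T : Set V} (p : G.Walk u v)
    (hpT : ∀ z ∈ p.support, z ∈ T) :
    ∃ q : G.Walk u v, q.IsPath ∧ q.IsChordless ∧ ∀ z ∈ q.support, z ∈ T := by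
  classical
  obtain ⟨q, hqT, hqmin⟩ := (InvImage.wf (length : G.Walk u v → ℕ) wellFounded_lt).has_min
    {q | ∀ z ∈ q.support, z ∈ T} ⟨p, hpT⟩
  have hbT : ∀ z ∈ q.bypass.support, z ∈ T := fun z hz =>
    hqT z (q.support_bypass_subset_support hz)
  refine ⟨q.bypass, q.bypass_isPath, isChordless_of_forall_length_le _ fun r hr => ?_, hbT⟩
  have : ¬r.length < q.length := hqmin r fun z hz => hbT z (hr hz)
  have := q.length_bypass_le_length
  omega

lemma IsPath.start_notMem_support_tail {p : G.Walk u v} (hp : p.IsPath) :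
    u ∉ p.support.tail :=
  (List.nodup_cons.mp (p.cons_tail_support ▸ hp.support_nodup)).1

lemma dist_getVert_le (p : G.Walk u v) (k : ℕ) : G.dist u (p.getVert k) ≤ k :=
  (dist_le (p.take k)).trans (by simp)

lemma dist_lt_of_length_eq_dist {p : G.Walk u v} (hp : p.length = G.dist u v) {z : V}
    (hz : z ∈ p.support) (hzv : z ≠ v) : G.dist u z < G.dist u v := by
  obtain ⟨k, rfl, hk⟩ := mem_support_iff_exists_getVert.mp hz
  have : k ≠ p.length := fun h => hzv (h ▸ p.getVert_length)
  have := p.dist_getVert_le k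
  omega

end SimpleGraph.Walk

lemma Nat.exists_enclosing_gap {P : ℕ → Prop} {a b n : ℕ} (hab : a ≤ b) (hbn : b ≤ n)
    (ha : P a) (hb : ¬P b) (hn : P n) :
    ∃ a' b', a' < b ∧ b < b' ∧ b' ≤ n ∧ P a' ∧ P b' ∧ ∀ k, a' < k → k < b' → ¬P k := by
  classical
  have hbn' : b < n := lt_of_le_of_ne hbn (by rintro rfl; exact hb hn)
  have hex : ∃ k, b < k ∧ P k := ⟨n, hbn', hn⟩
  have ha' : P (Nat.findGreatest P b) := Nat.findGreatest_spec hab ha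
  refine ⟨Nat.findGreatest P b, Nat.find hex,
    lt_of_le_of_ne (Nat.findGreatest_le b) fun h => hb (h ▸ ha'), (Nat.find_spec hex).1,
    Nat.find_min' hex ⟨hbn', hn⟩, ha',
    (Nat.find_spec hex).2, fun k hk hk' hPk => ?_⟩
  rcases le_or_gt k b with hkb | hbk
  · exact Nat.findGreatest_is_greatest hk hkb hPk
  · exact Nat.find_min hex hk' ⟨hbk, hPk⟩

lemma IsChordal.adj_of_isChordless {V : Type} {G : SimpleGraph V} (hch : IsChordal G)
    {x y : V} (hxy : x ≠ y) {p q : G.Walk x y} (hp : p.IsPath) (hq : q.IsPath)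
    (hpc : p.IsChordless) (hqc : q.IsChordless)
    (hdisj : ∀ z ∈ p.support, z ∈ q.support → z = x ∨ z = y)
    (hsep : ∀ a ∈ p.support, ∀ b ∈ q.support, G.Adj a b → a ∈ q.support ∨ b ∈ p.support) :
    G.Adj x y := by
  by_contra hna
  have two_le : ∀ r : G.Walk x y, 2 ≤ r.length := fun r => by
    by_contra! h
    interval_cases hr : r.length
    · exact hxy (Walk.eq_of_length_eq_zero hr)
    · exact hna (Walk.adj_of_length_eq_one hr)
  have hcyc : (p.append q.reverse).IsCycle := by
    refine hp.isCycle_append hq.reverse (List.disjoint_left.mpr fun z hzp hzq => ?_)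
      (Or.inl (two_le p))
    have hzx : z ≠ x := by rintro rfl; exact hp.start_notMem_support_tail hzp
    have hzy : z ≠ y := by rintro rfl; exact hq.reverse.start_notMem_support_tail hzq
    rcases hdisj z (List.mem_of_mem_tail hzp)
      (by simpa using List.mem_of_mem_tail hzq) with h | h
    · exact hzx h
    · exact hzy h
  obtain ⟨a, b, ha, hb, hab, hne⟩ := hch x _ hcyc
    (by simp only [Walk.length_append, Walk.length_reverse]; linarith [two_le p, two_le q])
  simp only [Walk.mem_support_append_iff, Walk.support_reverse, List.mem_reverse] at ha hb
  simp only [Walk.edges_append, Walk.edges_reverse, List.mem_append, List.mem_reverse,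
    not_or] at hne
  have in_p : a ∈ p.support → b ∈ p.support → False := fun ha hb =>
    hne.1 (hpc.mem_edges ha hb hab)
  have in_q : a ∈ q.support → b ∈ q.support → False := fun ha hb =>
    hne.2 (hqc.mem_edges ha hb hab)
  rcases ha with ha | ha <;> rcases hb with hb | hb
  · exact in_p ha hb
  · rcases hsep a ha b hb hab with h | h
    · exact in_q h hb
    · exact in_p ha h
  · rcases hsep b hb a ha hab.symm with h | h
    · exact in_q ha h
    · exact in_p h hb
  · exact in_q ha hb

lemma IsChordal.adj_of_walk_above_layer {V : Type} {G : SimpleGraph V} (hG : G.Connected)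
    (hch : IsChordal G) (s : V) {x y : V} (hxy : x ≠ y) (hy : G.dist s y = G.dist s x)
    (q : G.Walk x y) (hq : ∀ z ∈ q.support, z = x ∨ z = y ∨ G.dist s x < G.dist s z) :
    G.Adj x y := by
  obtain ⟨px, hpx⟩ := hG.exists_walk_length_eq_dist s x
  obtain ⟨py, hpy⟩ := hG.exists_walk_length_eq_dist s y
  have hbelow : ∀ z ∈ (px.reverse.append py).support,
      z = x ∨ z = y ∨ G.dist s z < G.dist s x := by
    intro z hz
    rw [Walk.mem_support_append_iff, Walk.support_reverse, List.mem_reverse] at hz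
    by_cases hzx : z = x
    · exact .inl hzx
    by_cases hzy : z = y
    · exact .inr (.inl hzy)
    refine .inr (.inr ?_)
    rcases hz with hz | hz
    · exact Walk.dist_lt_of_length_eq_dist hpx hz hzx
    · exact hy ▸ Walk.dist_lt_of_length_eq_dist hpy hz hzy
  obtain ⟨P, hP, hPc, hPT⟩ :=
    q.exists_isPath_isChordless_of_support_subset (T := {z | z = x ∨ z = y ∨ _}) hq
  obtain ⟨Q, hQ, hQc, hQT⟩ :=
    Walk.exists_isPath_isChordless_of_support_subset (T := {z | z = x ∨ z = y ∨ _}) _ hbelow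
  refine hch.adj_of_isChordless hxy hP hQ hPc hQc (fun z hzP hzQ => ?_)
    (fun a ha b hb hab => ?_)
  · rcases hPT z hzP with h | h | h
    · exact .inl h
    · exact .inr h
    rcases hQT z hzQ with rfl | rfl | h' <;> omega
  · rcases hPT a ha with rfl | rfl | ha'
    · exact .inl Q.start_mem_support
    · exact .inl Q.end_mem_support
    rcases hQT b hb with rfl | rfl | hb'
    · exact .inr P.start_mem_support
    · exact .inr P.end_mem_support
    rcases hab.diff_dist_adj (u := s) with h | h | h <;> omega

theorem shortest_witnessing_path_layers_general
    {V : Type} (G : SimpleGraph V) (hG : G.Connected) (hch : IsChordal G)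
    (s : V) (σ : V → ℕ)
    (hlayer : ∀ u w : V, G.dist s u < G.dist s w → σ u < σ w)
    (r j : ℕ) (v w : V) (hw : G.dist s w = j)
    (p : G.Walk v w) (hp : p.IsPath) (hlen : p.length ≤ r)
    (hwit : ∀ x ∈ p.support, σ w ≤ σ x)
    (hmin : ∀ q : G.Walk v w, q.IsPath → q.length ≤ r →
      (∀ x ∈ q.support, σ w ≤ σ x) → p.length ≤ q.length) :
    (∀ x ∈ p.support, j ≤ G.dist s x) ∧
    (∀ a b : ℕ, a ≤ b → b ≤ p.length → G.dist s (p.getVert a) = j →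
      G.dist s (p.getVert b) = j) := by
  classical
  have hge : ∀ x ∈ p.support, j ≤ G.dist s x := fun x hx => by
    by_contra! h
    exact (hwit x hx).not_gt (hlayer x w (hw ▸ h))
  refine ⟨hge, fun a b hab hb ha => by_contra fun hbj => ?_⟩
  obtain ⟨a', b', ha'b, hbb', hb'n, ha', hb', hgap⟩ :=
    Nat.exists_enclosing_gap (P := fun k => G.dist s (p.getVert k) = j) hab hb ha hbj
      (by simpa using hw)
  obtain ⟨q, hq⟩ := p.exists_walk_getVert_getVert (a := a') (b := b') (by omega)
  have hne : p.getVert a' ≠ p.getVert b' := fun h =>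
    (show a' ≠ b' by omega) (hp.getVert_injOn (show a' ≤ p.length by omega) hb'n h)
  have hadj : G.Adj (p.getVert a') (p.getVert b') := by
    refine hch.adj_of_walk_above_layer hG s hne (hb'.trans ha'.symm) q fun z hz => ?_
    obtain ⟨k, hk, hk', rfl⟩ := hq z hz
    rcases hk.eq_or_lt with rfl | hk
    · exact .inl rfl
    rcases hk'.eq_or_lt with rfl | hk'
    · exact .inr (.inl rfl)
    exact .inr (.inr (ha' ▸ (hge _ (p.getVert_mem_support k)).lt_of_ne' (hgap k hk hk')))
  obtain ⟨q', hq'len, hq'sub⟩ := p.exists_shortcut (by omega) hb'n hadj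
  have := q'.length_bypass_le_length
  have := hmin q'.bypass q'.bypass_isPath (by omega)
    fun x hx => hwit x (hq'sub (q'.support_bypass_subset_support hx))
  omega

theorem shortest_witnessing_path_layers
    {V : Type} [Fintype V] (G : SimpleGraph V) (hG : G.Connected) (hch : IsChordal G)
    (s : V) (σ : V → ℕ) (hσ : Function.Injective σ)
    (hlayer : ∀ u w : V, G.dist s u < G.dist s w → σ u < σ w)
    (r i j : ℕ) (v w : V) (hv : G.dist s v = i) (hw : G.dist s w = j) (hji : j ≤ i)
    (p : G.Walk v w) (hp : p.IsPath) (hlen : p.length ≤ r)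
    (hwit : ∀ x ∈ p.support, σ w ≤ σ x)
    (hmin : ∀ q : G.Walk v w, q.IsPath → q.length ≤ r →
      (∀ x ∈ q.support, σ w ≤ σ x) → p.length ≤ q.length) :
    (∀ x ∈ p.support, j ≤ G.dist s x) ∧
    (∀ a b : ℕ, a ≤ b → b ≤ p.length → G.dist s (p.getVert a) = j →
      G.dist s (p.getVert b) = j) :=
  shortest_witnessing_path_layers_general G hG hch s σ hlayer r j v w hw p hp hlen hwit hmin
end
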